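/- arXiv:2009.06621 — 6 statements merged into one kernel-verified Lean document; each statement's English description precedes it below -/
import Mathlib

section
/- (Frisch–Waugh–Lovell Theorem) Let (β̂1', β̂2')' = (X'X)^{-1}X'Y be the OLS coefficients from regressing Y on X = (X1, X2). Let Ỹ = (I-H1)Y and X̃2 = (I-H1)X2 with H1 = X1(X1'X1)^{-1}X1', and let β̃2 = (X̃2'X̃2)^{-1}X̃2'Ỹ. Then β̂2 = β̃2. -/
/-!
Let `M = 1 - X₁(X₁ᵀX₁)⁻¹X₁ᵀ`. It is symmetric, kills `X₁`, and fixes every vector orthogonal to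
the columns of `X₁`. The residual `e = Y - X₁β̂₁ - X₂β̂₂` of the full regression is orthogonal to
the columns of `X₁` and `X₂`, so `MY - MX₂β̂₂ = M(e + X₁β̂₁) = e`, and `(MX₂)ᵀe = X₂ᵀMe = X₂ᵀe = 0`.
Thus `β̂₂` solves the normal equations of the regression of `MY` on `MX₂`, whose solution is unique.
-/

open Matrix

namespace Matrix

variable {R m k l : Type*} [CommRing R] [Fintype m]

theorem transpose_fromCols_mulVec_eq_zero_iff (A₁ : Matrix m k R) (A₂ : Matrix m l R)
    (v : m → R) : (fromCols A₁ A₂)ᵀ *ᵥ v = 0 ↔ A₁ᵀ *ᵥ v = 0 ∧ A₂ᵀ *ᵥ v = 0 := by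
  rw [transpose_fromCols, fromRows_mulVec, ← Sum.elim_zero_zero, Sum.elim_eq_iff]

variable [Fintype k] [DecidableEq k]

noncomputable def olsCoeff (A : Matrix m k R) (y : m → R) : k → R :=
  (Aᵀ * A)⁻¹ *ᵥ (Aᵀ *ᵥ y)

theorem eq_olsCoeff_iff_transpose_mulVec_residual_eq_zero {A : Matrix m k R} {y : m → R}
    {b : k → R} (hA : IsUnit (Aᵀ * A)) :
    b = olsCoeff A y ↔ Aᵀ *ᵥ (y - A *ᵥ b) = 0 := by
  have hdet : IsUnit (Aᵀ * A).det := (isUnit_iff_isUnit_det _).mp hA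
  rw [mulVec_sub, mulVec_mulVec, sub_eq_zero, eq_comm (a := Aᵀ *ᵥ y), olsCoeff]
  constructor
  · rintro rfl
    rw [mulVec_mulVec, mul_nonsing_inv _ hdet, one_mulVec]
  · intro h
    rw [← h, mulVec_mulVec, nonsing_inv_mul _ hdet, one_mulVec]

variable [DecidableEq m]

/-- The projection onto the orthogonal complement of the column space of `A`. -/
noncomputable def residualMaker (A : Matrix m k R) : Matrix m m R :=
  1 - A * (Aᵀ * A)⁻¹ * Aᵀ

theorem transpose_residualMaker (A : Matrix m k R) : (residualMaker A)ᵀ = residualMaker A := by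
  rw [residualMaker, transpose_sub, transpose_one, transpose_mul, transpose_mul,
    transpose_transpose, transpose_nonsing_inv, transpose_mul, transpose_transpose, Matrix.mul_assoc]

theorem residualMaker_mul_self {A : Matrix m k R} (hA : IsUnit (Aᵀ * A)) :
    residualMaker A * A = 0 := by
  rw [residualMaker, Matrix.sub_mul, Matrix.one_mul, Matrix.mul_assoc, Matrix.mul_assoc,
    nonsing_inv_mul _ ((isUnit_iff_isUnit_det _).mp hA), Matrix.mul_one, sub_self]

theorem residualMaker_mulVec_of_transpose_mulVec_eq_zero {A : Matrix m k R} {v : m → R}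
    (hv : Aᵀ *ᵥ v = 0) : residualMaker A *ᵥ v = v := by
  rw [residualMaker, sub_mulVec, one_mulVec, ← mulVec_mulVec, hv, mulVec_zero, sub_zero]

theorem olsCoeff_fromCols_inr {A₁ : Matrix m k R} [Fintype l] [DecidableEq l] {A₂ : Matrix m l R}
    (y : m → R) (hA : IsUnit ((fromCols A₁ A₂)ᵀ * fromCols A₁ A₂)) (hA₁ : IsUnit (A₁ᵀ * A₁))
    (hA₂ : IsUnit ((residualMaker A₁ * A₂)ᵀ * (residualMaker A₁ * A₂))) :
    (fun j => olsCoeff (fromCols A₁ A₂) y (Sum.inr j)) =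
      olsCoeff (residualMaker A₁ * A₂) (residualMaker A₁ *ᵥ y) := by
  set b := olsCoeff (fromCols A₁ A₂) y
  set e := y - fromCols A₁ A₂ *ᵥ b
  set M := residualMaker A₁
  obtain ⟨he₁, he₂⟩ := (transpose_fromCols_mulVec_eq_zero_iff A₁ A₂ e).mp
    ((eq_olsCoeff_iff_transpose_mulVec_residual_eq_zero hA).mp rfl)
  have hMe : M *ᵥ e = e := residualMaker_mulVec_of_transpose_mulVec_eq_zero he₁
  have hres : M *ᵥ y - (M * A₂) *ᵥ (b ∘ Sum.inr) = e := by
    have hy : y = e + A₁ *ᵥ (b ∘ Sum.inl) + A₂ *ᵥ (b ∘ Sum.inr) := by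
      rw [add_assoc, ← fromCols_mulVec, sub_add_cancel]
    rw [hy, ← mulVec_mulVec, mulVec_add, mulVec_add, mulVec_mulVec _ M A₁,
      residualMaker_mul_self hA₁, zero_mulVec, add_zero, add_sub_cancel_right, hMe]
  rw [eq_olsCoeff_iff_transpose_mulVec_residual_eq_zero hA₂]
  change (M * A₂)ᵀ *ᵥ (M *ᵥ y - (M * A₂) *ᵥ (b ∘ Sum.inr)) = 0
  rw [hres, transpose_mul, transpose_residualMaker, ← mulVec_mulVec, hMe, he₂]

end Matrix

theorem stmt_4 {n K L : ℕ}
    (X1 : Matrix (Fin n) (Fin K) ℝ) (X2 : Matrix (Fin n) (Fin L) ℝ) (Y : Fin n → ℝ)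
    (X : Matrix (Fin n) (Fin K ⊕ Fin L) ℝ) (hX : X = Matrix.fromCols X1 X2)
    (H1 : Matrix (Fin n) (Fin n) ℝ) (hH1 : H1 = X1 * (X1ᵀ * X1)⁻¹ * X1ᵀ)
    (X2t : Matrix (Fin n) (Fin L) ℝ) (hX2t : X2t = (1 - H1) * X2)
    (Yt : Fin n → ℝ) (hYt : Yt = (1 - H1) *ᵥ Y)
    (betaHat : (Fin K ⊕ Fin L) → ℝ) (hbetaHat : betaHat = (Xᵀ * X)⁻¹ *ᵥ (Xᵀ *ᵥ Y))
    (betaTilde2 : Fin L → ℝ) (hbetaTilde2 : betaTilde2 = (X2tᵀ * X2t)⁻¹ *ᵥ (X2tᵀ *ᵥ Yt))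
    (hGX : IsUnit (Xᵀ * X)) (hG1 : IsUnit (X1ᵀ * X1)) (hG2 : IsUnit (X2tᵀ * X2t)) :
    (fun l => betaHat (Sum.inr l)) = betaTilde2 := by
  subst hX hH1 hX2t hYt hbetaHat hbetaTilde2
  exact olsCoeff_fromCols_inr Y hGX hG1 hG2
end

section
/- With notation as in the FWL theorem, the second block of the full OLS coefficient also satisfies β̂2 = (X̃2'X̃2)^{-1}X̃2'Y, i.e., regressing the raw outcome Y on the residualized regressors X̃2 gives the same coefficient as the full regression. -/
/-!
Write `Z = (1 - H₁) X₂ = X₂ - X₁ C` with `C = (X₁ᵀX₁)⁻¹X₁ᵀX₂`, so that `X₁ᵀZ = 0`. The OLS residual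
`r = Y - Xβ̂` is orthogonal to the columns of `X₁` and `X₂`, hence to those of `Z`, so
`ZᵀY = ZᵀXβ̂ = ZᵀX₁β̂₁ + ZᵀX₂β̂₂ = ZᵀZβ̂₂`, using `ZᵀX₁ = 0` and `ZᵀX₂ = ZᵀZ + ZᵀX₁C = ZᵀZ`.
-/

open Matrix

namespace Matrix

variable {R : Type*} [CommRing R] {m k l : Type*} [Fintype m]

theorem transpose_mulVec_eq_zero_of_fromCols {A : Matrix m k R} {B : Matrix m l R} {r : m → R}
    (h : (fromCols A B)ᵀ *ᵥ r = 0) : Aᵀ *ᵥ r = 0 ∧ Bᵀ *ᵥ r = 0 := by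
  rw [transpose_fromCols, fromRows_mulVec, ← Sum.elim_zero_zero] at h
  exact Sum.elim_eq_iff.mp h

variable [Fintype k]

section Projection

variable [DecidableEq m] [DecidableEq k]

theorem sub_projection_mul_eq (A : Matrix m k R) (B : Matrix m l R) :
    (1 - A * (Aᵀ * A)⁻¹ * Aᵀ) * B = B - A * ((Aᵀ * A)⁻¹ * Aᵀ * B) := by
  rw [Matrix.sub_mul, Matrix.one_mul, Matrix.mul_assoc, Matrix.mul_assoc, Matrix.mul_assoc]

theorem transpose_mul_sub_projection_mul {A : Matrix m k R} (hA : IsUnit (Aᵀ * A))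
    (B : Matrix m l R) : Aᵀ * ((1 - A * (Aᵀ * A)⁻¹ * Aᵀ) * B) = 0 := by
  rw [← Matrix.mul_assoc, Matrix.mul_sub, Matrix.mul_one, ← Matrix.mul_assoc, ← Matrix.mul_assoc,
    mul_nonsing_inv _ ((isUnit_iff_isUnit_det _).mp hA), Matrix.one_mul, sub_self,
    Matrix.zero_mul]

end Projection

variable [Fintype l]

theorem gram_mulVec_inr_eq_of_normal_eq {A : Matrix m k R} {B Z : Matrix m l R}
    {C : Matrix k l R} (hZ : Z = B - A * C) (hAZ : Aᵀ * Z = 0) {y : m → R} {β : k ⊕ l → R}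
    (hβ : ((fromCols A B)ᵀ * fromCols A B) *ᵥ β = (fromCols A B)ᵀ *ᵥ y) :
    (Zᵀ * Z) *ᵥ (β ∘ Sum.inr) = Zᵀ *ᵥ y := by
  set r := y - fromCols A B *ᵥ β with hr
  obtain ⟨hAr, hBr⟩ : Aᵀ *ᵥ r = 0 ∧ Bᵀ *ᵥ r = 0 := by
    refine transpose_mulVec_eq_zero_of_fromCols ?_
    rw [hr, mulVec_sub, mulVec_mulVec, hβ, sub_self]
  have hZr : Zᵀ *ᵥ r = 0 := by
    rw [hZ, transpose_sub, sub_mulVec, transpose_mul, ← mulVec_mulVec, hAr, hBr, mulVec_zero,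
      sub_zero]
  have hZA : Zᵀ * A = 0 := by
    rw [← transpose_transpose (Zᵀ * A), transpose_mul, transpose_transpose, hAZ, transpose_zero]
  have hZB : Zᵀ * B = Zᵀ * Z := by
    rw [eq_add_of_sub_eq' hZ.symm, Matrix.mul_add, ← Matrix.mul_assoc, hZA, Matrix.zero_mul,
      zero_add]
  calc (Zᵀ * Z) *ᵥ (β ∘ Sum.inr) = Zᵀ *ᵥ (fromCols A B *ᵥ β) := by
        rw [fromCols_mulVec, mulVec_add, mulVec_mulVec, mulVec_mulVec, hZA, hZB, zero_mulVec,
          zero_add]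
    _ = Zᵀ *ᵥ y := by rwa [hr, mulVec_sub, sub_eq_zero, eq_comm] at hZr

end Matrix

theorem stmt_5 {n K L : ℕ}
    (X1 : Matrix (Fin n) (Fin K) ℝ) (X2 : Matrix (Fin n) (Fin L) ℝ) (Y : Fin n → ℝ)
    (X : Matrix (Fin n) (Fin K ⊕ Fin L) ℝ) (hX : X = Matrix.fromCols X1 X2)
    (H1 : Matrix (Fin n) (Fin n) ℝ) (hH1 : H1 = X1 * (X1ᵀ * X1)⁻¹ * X1ᵀ)
    (X2t : Matrix (Fin n) (Fin L) ℝ) (hX2t : X2t = (1 - H1) * X2)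
    (betaHat : (Fin K ⊕ Fin L) → ℝ) (hbetaHat : betaHat = (Xᵀ * X)⁻¹ *ᵥ (Xᵀ *ᵥ Y))
    (hGX : IsUnit (Xᵀ * X)) (hG1 : IsUnit (X1ᵀ * X1)) (hG2 : IsUnit (X2tᵀ * X2t)) :
    (fun l => betaHat (Sum.inr l)) = (X2tᵀ * X2t)⁻¹ *ᵥ (X2tᵀ *ᵥ Y) := by
  have hnormal : (Xᵀ * X) *ᵥ betaHat = Xᵀ *ᵥ Y := by
    rw [hbetaHat, mulVec_mulVec, mul_nonsing_inv _ ((isUnit_iff_isUnit_det _).mp hGX),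
      one_mulVec]
  subst hX
  have hgram : (X2tᵀ * X2t) *ᵥ (betaHat ∘ Sum.inr) = X2tᵀ *ᵥ Y := by
    subst hH1 hX2t
    exact gram_mulVec_inr_eq_of_normal_eq (sub_projection_mul_eq X1 X2)
      (transpose_mul_sub_projection_mul hG1 X2) hnormal
  rw [← hgram, mulVec_mulVec, nonsing_inv_mul _ ((isUnit_iff_isUnit_det _).mp hG2), one_mulVec]
  rfl
end

section
/- The residual vector from the full regression equals the residual vector from the partial regression: (I - H)Y = (I - H̃2)(I - H1)Y, where H = X(X'X)^{-1}X', H1 = X1(X1'X1)^{-1}X1', X̃2 = (I-H1)X2, and H̃2 = X̃2(X̃2'X̃2)^{-1}X̃2'. -/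
/-!
`P A = A (AᵀA)⁻¹ Aᵀ` (`hatMatrix A`) is the orthogonal projection onto the column space of `A`.
With `X̃₂ = (1 - P X₁) X₂`, the columns of `X₁` and `X̃₂` are orthogonal and span the column
space of `X = (X₁ X₂)`, so `P X = P X₁ + P X̃₂` (Frisch–Waugh–Lovell): both sides are symmetric
and each fixes the columns of the other, and symmetric matrices with `P Q = Q`, `Q P = P` coincide.
Since `P X̃₂ * P X₁ = 0`, expanding `(1 - P X̃₂)(1 - P X₁)` gives `1 - P X₁ - P X̃₂ = 1 - P X`.
-/

open Matrix

namespace Matrix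

variable {m k l R : Type*} [Fintype m] [Fintype k] [DecidableEq k] [CommRing R]

lemma eq_of_transpose_eq_of_mul_eq {P Q : Matrix m m R} (hP : Pᵀ = P) (hQ : Qᵀ = Q)
    (hPQ : P * Q = Q) (hQP : Q * P = P) : P = Q :=
  calc P = Q * P := hQP.symm
    _ = (P * Q)ᵀ := by rw [transpose_mul, hP, hQ]
    _ = Q := by rw [hPQ, hQ]

noncomputable def hatMatrix (A : Matrix m k R) : Matrix m m R := A * (Aᵀ * A)⁻¹ * Aᵀ

variable {A : Matrix m k R}

lemma transpose_hatMatrix (A : Matrix m k R) : (hatMatrix A)ᵀ = hatMatrix A := by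
  simp only [hatMatrix, transpose_mul, transpose_transpose, transpose_nonsing_inv, Matrix.mul_assoc]

lemma hatMatrix_mul_self (hA : IsUnit (Aᵀ * A)) : hatMatrix A * A = A := by
  rw [hatMatrix, Matrix.mul_assoc, Matrix.mul_assoc,
    nonsing_inv_mul _ ((isUnit_iff_isUnit_det _).mp hA), Matrix.mul_one]

lemma mul_hatMatrix_of_mul_eq {P : Matrix m m R} (h : P * A = A) :
    P * hatMatrix A = hatMatrix A := by
  rw [hatMatrix, ← Matrix.mul_assoc, ← Matrix.mul_assoc, h]

lemma mul_hatMatrix_of_mul_eq_zero {n : Type*} {B : Matrix n m R} (h : B * A = 0) :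
    B * hatMatrix A = 0 := by
  rw [hatMatrix, ← Matrix.mul_assoc, ← Matrix.mul_assoc, h, Matrix.zero_mul, Matrix.zero_mul]

lemma hatMatrix_mul_of_transpose_mul_eq_zero {n : Type*} {B : Matrix m n R} (h : Aᵀ * B = 0) :
    hatMatrix A * B = 0 := by
  rw [hatMatrix, Matrix.mul_assoc, h, Matrix.mul_zero]

section Residual

variable [DecidableEq m]

lemma one_sub_hatMatrix_mul_self (hA : IsUnit (Aᵀ * A)) : (1 - hatMatrix A) * A = 0 := by
  rw [Matrix.sub_mul, Matrix.one_mul, hatMatrix_mul_self hA, sub_self]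

lemma transpose_one_sub_hatMatrix_mul_mul_self (hA : IsUnit (Aᵀ * A)) (B : Matrix m l R) :
    ((1 - hatMatrix A) * B)ᵀ * A = 0 := by
  rw [transpose_mul, transpose_sub, transpose_one, transpose_hatMatrix, Matrix.mul_assoc,
    one_sub_hatMatrix_mul_self hA, Matrix.mul_zero]

lemma hatMatrix_one_sub_hatMatrix_mul_mul_self [Fintype l] [DecidableEq l] (hA : IsUnit (Aᵀ * A))
    (B : Matrix m l R) :
    hatMatrix ((1 - hatMatrix A) * B) * A = 0 :=
  hatMatrix_mul_of_transpose_mul_eq_zero (transpose_one_sub_hatMatrix_mul_mul_self hA B)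

lemma hatMatrix_one_sub_hatMatrix_mul_mul_hatMatrix [Fintype l] [DecidableEq l]
    (hA : IsUnit (Aᵀ * A)) (B : Matrix m l R) :
    hatMatrix ((1 - hatMatrix A) * B) * hatMatrix A = 0 :=
  hatMatrix_mul_of_transpose_mul_eq_zero
    (mul_hatMatrix_of_mul_eq_zero (transpose_one_sub_hatMatrix_mul_mul_self hA B))

theorem hatMatrix_fromCols [Fintype l] [DecidableEq l] {B : Matrix m l R}
    (hA : IsUnit (Aᵀ * A)) (hAB : IsUnit ((fromCols A B)ᵀ * fromCols A B))
    (hB' : IsUnit (((1 - hatMatrix A) * B)ᵀ * ((1 - hatMatrix A) * B))) :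
    hatMatrix (fromCols A B) = hatMatrix A + hatMatrix ((1 - hatMatrix A) * B) := by
  obtain ⟨hPA, hPB⟩ : hatMatrix (fromCols A B) * A = A ∧ hatMatrix (fromCols A B) * B = B := by
    rw [← fromCols_ext_iff, ← mul_fromCols]
    exact hatMatrix_mul_self hAB
  have hPB' : hatMatrix (fromCols A B) * ((1 - hatMatrix A) * B) = (1 - hatMatrix A) * B := by
    rw [← Matrix.mul_assoc, Matrix.mul_sub, Matrix.mul_one, mul_hatMatrix_of_mul_eq hPA,
      Matrix.sub_mul, hPB, Matrix.sub_mul, Matrix.one_mul]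
  have hQA : (hatMatrix A + hatMatrix ((1 - hatMatrix A) * B)) * A = A := by
    rw [Matrix.add_mul, hatMatrix_mul_self hA, hatMatrix_one_sub_hatMatrix_mul_mul_self hA,
      add_zero]
  have hB'B : hatMatrix ((1 - hatMatrix A) * B) * B = (1 - hatMatrix A) * B := by
    conv_rhs => rw [← hatMatrix_mul_self hB', ← Matrix.mul_assoc, Matrix.mul_sub, Matrix.mul_one,
      hatMatrix_one_sub_hatMatrix_mul_mul_hatMatrix hA, sub_zero]
  have hQB : (hatMatrix A + hatMatrix ((1 - hatMatrix A) * B)) * B = B := by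
    rw [Matrix.add_mul, hB'B, Matrix.sub_mul, Matrix.one_mul, add_sub_cancel]
  refine eq_of_transpose_eq_of_mul_eq (transpose_hatMatrix _)
    (by rw [transpose_add, transpose_hatMatrix, transpose_hatMatrix])
    (by rw [Matrix.mul_add, mul_hatMatrix_of_mul_eq hPA, mul_hatMatrix_of_mul_eq hPB'])
    (mul_hatMatrix_of_mul_eq ?_)
  rw [mul_fromCols, hQA, hQB]

end Residual

end Matrix

theorem stmt_6 {n K L : ℕ}
    (X1 : Matrix (Fin n) (Fin K) ℝ) (X2 : Matrix (Fin n) (Fin L) ℝ) (Y : Fin n → ℝ)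
    (X : Matrix (Fin n) (Fin K ⊕ Fin L) ℝ) (hX : X = Matrix.fromCols X1 X2)
    (H : Matrix (Fin n) (Fin n) ℝ) (hH : H = X * (Xᵀ * X)⁻¹ * Xᵀ)
    (H1 : Matrix (Fin n) (Fin n) ℝ) (hH1 : H1 = X1 * (X1ᵀ * X1)⁻¹ * X1ᵀ)
    (X2t : Matrix (Fin n) (Fin L) ℝ) (hX2t : X2t = (1 - H1) * X2)
    (H2t : Matrix (Fin n) (Fin n) ℝ) (hH2t : H2t = X2t * (X2tᵀ * X2t)⁻¹ * X2tᵀ)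
    (hGX : IsUnit (Xᵀ * X)) (hG1 : IsUnit (X1ᵀ * X1)) (hG2 : IsUnit (X2tᵀ * X2t)) :
    (1 - H) *ᵥ Y = (1 - H2t) *ᵥ ((1 - H1) *ᵥ Y) := by
  have hsplit : H = H1 + H2t := by
    subst hX hH hH1 hX2t hH2t
    exact hatMatrix_fromCols hG1 hGX hG2
  have hcross : H2t * H1 = 0 := by
    subst hH1 hX2t hH2t
    exact hatMatrix_one_sub_hatMatrix_mul_mul_hatMatrix hG1 X2
  rw [mulVec_mulVec, hsplit, Matrix.mul_sub, Matrix.mul_one, Matrix.sub_mul, Matrix.one_mul,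
    hcross, sub_zero, sub_sub, add_comm H2t]
end

section
/- In a stratified experiment with strata k=1,...,K, treatment indicator Z_i ∈ {0,1}, and outcome Y_i, the OLS coefficient of Z in the no-intercept regression of Y on Z and the K stratum indicators equals τ̂_OLS = Σ_k ω_[k] τ̂_[k], where τ̂_[k] = Ȳ_[k]1 - Ȳ_[k]0 is the within-stratum difference in treatment and control means, and ω_[k] = π_[k] e_[k](1-e_[k]) / Σ_{k'} π_[k'] e_[k'](1-e_[k']), with π_[k] = n_[k]/n and e_[k] = n_[k]1/n_[k]. -/
open Matrix Finset

noncomputable section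

variable {n K : ℕ}

/-- Units in stratum `k`. -/
def stratSet (stratum : Fin n → Fin K) (k : Fin K) : Finset (Fin n) :=
  Finset.univ.filter (fun i => stratum i = k)

/-- Treated units in stratum `k`. -/
def treatSet (stratum : Fin n → Fin K) (Z : Fin n → Bool) (k : Fin K) : Finset (Fin n) :=
  (stratSet stratum k).filter (fun i => Z i)

/-- Control units in stratum `k`. -/
def ctrlSet (stratum : Fin n → Fin K) (Z : Fin n → Bool) (k : Fin K) : Finset (Fin n) :=
  (stratSet stratum k).filter (fun i => ¬ Z i)

/-- Stratum size `n_[k]`. -/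
def nS (stratum : Fin n → Fin K) (k : Fin K) : ℕ := (stratSet stratum k).card

/-- Number of treated units `n_[k]1`. -/
def n1 (stratum : Fin n → Fin K) (Z : Fin n → Bool) (k : Fin K) : ℕ :=
  (treatSet stratum Z k).card

/-- Number of control units `n_[k]0`. -/
def n0 (stratum : Fin n → Fin K) (Z : Fin n → Bool) (k : Fin K) : ℕ :=
  (ctrlSet stratum Z k).card

/-- Stratum proportion `π_[k] = n_[k]/n`. -/
def piS (stratum : Fin n → Fin K) (k : Fin K) : ℝ := (nS stratum k : ℝ) / n

/-- Propensity score `e_[k] = n_[k]1/n_[k]`. -/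
def eS (stratum : Fin n → Fin K) (Z : Fin n → Bool) (k : Fin K) : ℝ :=
  (n1 stratum Z k : ℝ) / (nS stratum k : ℝ)

/-- Treated mean `Ȳ_[k]1`. -/
def ybar1 (stratum : Fin n → Fin K) (Z : Fin n → Bool) (Y : Fin n → ℝ) (k : Fin K) : ℝ :=
  (∑ i ∈ treatSet stratum Z k, Y i) / (n1 stratum Z k : ℝ)

/-- Control mean `Ȳ_[k]0`. -/
def ybar0 (stratum : Fin n → Fin K) (Z : Fin n → Bool) (Y : Fin n → ℝ) (k : Fin K) : ℝ :=
  (∑ i ∈ ctrlSet stratum Z k, Y i) / (n0 stratum Z k : ℝ)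

/-- Within-stratum difference in means `τ̂_[k]`. -/
def tauK (stratum : Fin n → Fin K) (Z : Fin n → Bool) (Y : Fin n → ℝ) (k : Fin K) : ℝ :=
  ybar1 stratum Z Y k - ybar0 stratum Z Y k

/-- Weight `ω_[k] = π_[k]e_[k](1-e_[k]) / Σ_{k'} π_[k']e_[k'](1-e_[k'])`. -/
def wS (stratum : Fin n → Fin K) (Z : Fin n → Bool) (k : Fin K) : ℝ :=
  piS stratum k * eS stratum Z k * (1 - eS stratum Z k) /
    (∑ k', piS stratum k' * eS stratum Z k' * (1 - eS stratum Z k'))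

/-- Weighted average `τ̂_OLS = Σ_k ω_[k] τ̂_[k]`. -/
def tauOLS (stratum : Fin n → Fin K) (Z : Fin n → Bool) (Y : Fin n → ℝ) : ℝ :=
  ∑ k, wS stratum Z k * tauK stratum Z Y k

/-- Design matrix of the no-intercept regression of `Y` on `Z` and the stratum dummies. -/
def design (stratum : Fin n → Fin K) (Z : Fin n → Bool) :
    Matrix (Fin n) (Unit ⊕ Fin K) ℝ := fun i j =>
  match j with
  | Sum.inl _ => if Z i then 1 else 0
  | Sum.inr k => if stratum i = k then 1 else 0

/-- OLS coefficient vector from the regression of `Y` on `Z` and the stratum dummies. -/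
def olsCoef (stratum : Fin n → Fin K) (Z : Fin n → Bool) (Y : Fin n → ℝ) :
    (Unit ⊕ Fin K) → ℝ :=
  ((design stratum Z)ᵀ * design stratum Z)⁻¹ *ᵥ ((design stratum Z)ᵀ *ᵥ Y)

/-- OLS residual vector from the regression of `Y` on `Z` and the stratum dummies. -/
def olsResid (stratum : Fin n → Fin K) (Z : Fin n → Bool) (Y : Fin n → ℝ) (i : Fin n) : ℝ :=
  Y i - (design stratum Z *ᵥ olsCoef stratum Z Y) i

/-- Treated-group sample variance `s_[k]1²` (denominator `n_[k]1`). -/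
def s1sq (stratum : Fin n → Fin K) (Z : Fin n → Bool) (Y : Fin n → ℝ) (k : Fin K) : ℝ :=
  (∑ i ∈ treatSet stratum Z k, (Y i - ybar1 stratum Z Y k) ^ 2) / (n1 stratum Z k : ℝ)

/-- Control-group sample variance `s_[k]0²` (denominator `n_[k]0`). -/
def s0sq (stratum : Fin n → Fin K) (Z : Fin n → Bool) (Y : Fin n → ℝ) (k : Fin K) : ℝ :=
  (∑ i ∈ ctrlSet stratum Z k, (Y i - ybar0 stratum Z Y k) ^ 2) / (n0 stratum Z k : ℝ)

/-- Residual of `Z` from its regression on the stratum dummies: `Z̃_i = Z_i - e_[stratum i]`. -/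
def zTilde (stratum : Fin n → Fin K) (Z : Fin n → Bool) (i : Fin n) : ℝ :=
  (if Z i then 1 else 0) - eS stratum Z (stratum i)

end

section Aux
variable {n K : ℕ}

lemma design_mulVec (stratum : Fin n → Fin K) (Z : Fin n → Bool) (β : (Unit ⊕ Fin K) → ℝ)
    (i : Fin n) :
    (design stratum Z *ᵥ β) i =
      (if Z i then β (Sum.inl ()) else 0) + β (Sum.inr (stratum i)) := by
  simp [design, Matrix.mulVec, dotProduct, Fintype.sum_sum_type, ite_mul,
    Finset.sum_ite_eq]

lemma designT_mulVec_inl (stratum : Fin n → Fin K) (Z : Fin n → Bool) (w : Fin n → ℝ) :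
    ((design stratum Z)ᵀ *ᵥ w) (Sum.inl ()) = ∑ i ∈ univ.filter (fun i => Z i), w i := by
  simp [design, Matrix.mulVec, Matrix.transpose_apply, dotProduct, Finset.sum_filter,
    ite_mul]

lemma designT_mulVec_inr (stratum : Fin n → Fin K) (Z : Fin n → Bool) (w : Fin n → ℝ)
    (k : Fin K) :
    ((design stratum Z)ᵀ *ᵥ w) (Sum.inr k) = ∑ i ∈ stratSet stratum k, w i := by
  simp [design, Matrix.mulVec, Matrix.transpose_apply, dotProduct, stratSet,
    Finset.sum_filter, ite_mul]

lemma sum_treat_fiber (stratum : Fin n → Fin K) (Z : Fin n → Bool) (f : Fin n → ℝ) :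
    ∑ i ∈ univ.filter (fun i => Z i), f i = ∑ k, ∑ i ∈ treatSet stratum Z k, f i := by
  rw [← Finset.sum_fiberwise (univ.filter (fun i => Z i)) stratum f]
  refine Finset.sum_congr rfl fun k _ => Finset.sum_congr ?_ fun _ _ => rfl
  ext i
  simp [treatSet, stratSet, Finset.mem_filter, and_comm]

lemma nS_eq (stratum : Fin n → Fin K) (Z : Fin n → Bool) (k : Fin K) :
    nS stratum k = n1 stratum Z k + n0 stratum Z k := by
  classical
  rw [nS, n1, n0, treatSet, ctrlSet]
  exact (Finset.card_filter_add_card_filter_not (fun i => Z i = true)).symm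

end Aux

theorem stmt_11 {n K : ℕ} (stratum : Fin n → Fin K) (Z : Fin n → Bool) (Y : Fin n → ℝ)
    (h1 : ∀ k, 0 < n1 stratum Z k) (h0 : ∀ k, 0 < n0 stratum Z k) :
    olsCoef stratum Z Y (Sum.inl ()) = tauOLS stratum Z Y := by
  classical
  rcases Nat.eq_zero_or_pos K with hK | hK
  · -- K = 0 : everything is empty
    subst hK
    haveI : IsEmpty (Fin n) := ⟨fun i => (stratum i).elim0⟩
    have hY : (design stratum Z)ᵀ *ᵥ Y = 0 := by
      funext j
      simp [Matrix.mulVec, dotProduct]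
    simp [olsCoef, hY, tauOLS]
  -- K > 0
  haveI : Nonempty (Fin K) := ⟨⟨0, hK⟩⟩
  set X := design stratum Z with hX
  set A := Xᵀ * X with hA
  set τ := tauOLS stratum Z Y with hτ
  -- real abbreviations
  set a : Fin K → ℝ := fun k => (n1 stratum Z k : ℝ) with ha
  set b : Fin K → ℝ := fun k => (n0 stratum Z k : ℝ) with hb
  set m : Fin K → ℝ := fun k => (nS stratum k : ℝ) with hm
  have hapos : ∀ k, 0 < a k := fun k => by
    show (0:ℝ) < (n1 stratum Z k : ℝ); exact_mod_cast h1 k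
  have hbpos : ∀ k, 0 < b k := fun k => by
    show (0:ℝ) < (n0 stratum Z k : ℝ); exact_mod_cast h0 k
  have hmab : ∀ k, m k = a k + b k := fun k => by
    show ((nS stratum k : ℝ)) = (n1 stratum Z k : ℝ) + (n0 stratum Z k : ℝ)
    rw [nS_eq stratum Z k]; push_cast; ring
  have hmpos : ∀ k, 0 < m k := fun k => by
    rw [hmab k]; exact add_pos (hapos k) (hbpos k)
  set T : Fin K → ℝ := fun k => ∑ i ∈ treatSet stratum Z k, Y i with hT
  set C : Fin K → ℝ := fun k => ∑ i ∈ ctrlSet stratum Z k, Y i with hC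
  set d : Fin K → ℝ := fun k => a k * b k / m k with hd
  set D : ℝ := ∑ k, d k with hD
  have hdpos : ∀ k, 0 < d k := fun k => by
    exact div_pos (mul_pos (hapos k) (hbpos k)) (hmpos k)
  have hDpos : 0 < D := Finset.sum_pos (fun k _ => hdpos k) univ_nonempty
  have hnpos : (0 : ℝ) < n := by
    have := h1 (Classical.arbitrary (Fin K))
    have hn : 0 < n := by
      rcases Finset.card_pos.mp this with ⟨i, _⟩
      exact i.pos
    exact_mod_cast hn
  -- eS and 1 - eS
  have heS : ∀ k, eS stratum Z k = a k / m k := fun k => rfl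
  have heS' : ∀ k, 1 - eS stratum Z k = b k / m k := fun k => by
    have hM0 : m k ≠ 0 := (hmpos k).ne'
    rw [heS k]
    field_simp
    rw [hmab k]; ring
  -- weight identity : wS k * D = d k
  have hw : ∀ k, wS stratum Z k * D = d k := by
    intro k
    have hc : ∀ k', piS stratum k' * eS stratum Z k' * (1 - eS stratum Z k') = d k' / n := by
      intro k'
      have hM0 : m k' ≠ 0 := (hmpos k').ne'
      have hN0 : (n : ℝ) ≠ 0 := hnpos.ne'
      rw [heS' k', heS k', piS]
      show (nS stratum k' : ℝ) / n * (a k' / m k') * (b k' / m k') = a k' * b k' / m k' / n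
      have hm' : ((nS stratum k' : ℝ)) = m k' := rfl
      rw [hm']
      field_simp
    have hsum : (∑ k', piS stratum k' * eS stratum Z k' * (1 - eS stratum Z k')) = D / n := by
      rw [Finset.sum_congr rfl fun k' _ => hc k', ← Finset.sum_div]
    rw [wS, hc, hsum]
    have hN0 : (n : ℝ) ≠ 0 := hnpos.ne'
    have hD0 : D ≠ 0 := hDpos.ne'
    field_simp
  -- tauOLS * D = ∑ d k * tauK k
  have htau : τ * D = ∑ k, d k * tauK stratum Z Y k := by
    rw [hτ, tauOLS, Finset.sum_mul]
    exact Finset.sum_congr rfl fun k _ => by rw [mul_right_comm, hw k]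
  -- candidate coefficient vector
  set β : (Unit ⊕ Fin K) → ℝ :=
    Sum.elim (fun _ => τ)
      (fun k => (T k + C k) / m k - τ * eS stratum Z k) with hβ
  -- normal equations
  have hnormal : A *ᵥ β = Xᵀ *ᵥ Y := by
    rw [hA, ← Matrix.mulVec_mulVec]
    funext j
    rcases j with u | k
    · rcases u with ⟨⟩
      rw [designT_mulVec_inl, designT_mulVec_inl, sum_treat_fiber stratum Z,
        sum_treat_fiber stratum Z]
      have hterm : ∀ k, ∑ i ∈ treatSet stratum Z k, (X *ᵥ β) i
          = a k * τ + a k * ((T k + C k) / m k - τ * eS stratum Z k) := by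
        intro k
        have : ∀ i ∈ treatSet stratum Z k, (X *ᵥ β) i
            = τ + ((T k + C k) / m k - τ * eS stratum Z k) := by
          intro i hi
          have hik : stratum i = k ∧ Z i = true := by
            simpa [treatSet, stratSet] using hi
          rw [hX, design_mulVec, hik.1]
          simp [hik.2, hβ]
        rw [Finset.sum_congr rfl this, Finset.sum_const]
        show ((treatSet stratum Z k).card : ℕ) • _ = _
        rw [nsmul_eq_mul]
        show ((n1 stratum Z k : ℝ)) * _ = _
        ring
      rw [Finset.sum_congr rfl fun k _ => hterm k]
      have hTk : ∀ k, ∑ i ∈ treatSet stratum Z k, Y i = T k := fun _ => rfl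
      rw [Finset.sum_congr rfl fun k _ => hTk k]
      -- now a scalar identity
      have key : ∀ k, a k * τ + a k * ((T k + C k) / m k - τ * eS stratum Z k)
          = d k * τ - d k * tauK stratum Z Y k + T k := by
        intro k
        have hA0 : a k ≠ 0 := (hapos k).ne'
        have hB0 : b k ≠ 0 := (hbpos k).ne'
        have hM0 : a k + b k ≠ 0 := (add_pos (hapos k) (hbpos k)).ne'
        have e2 : eS stratum Z k = a k / (a k + b k) := by rw [heS, hmab]
        have d2 : d k = a k * b k / (a k + b k) := by
          show a k * b k / m k = _; rw [hmab]
        have t2 : tauK stratum Z Y k = T k / a k - C k / b k := rfl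
        rw [e2, d2, t2, hmab k]
        field_simp
        ring
      rw [Finset.sum_congr rfl fun k _ => key k, Finset.sum_add_distrib,
        Finset.sum_sub_distrib]
      have : ∑ k, d k * τ = τ * D := by rw [hD, Finset.mul_sum]; exact Finset.sum_congr rfl fun k _ => (mul_comm _ _)
      rw [this, htau]
      ring
    · rw [designT_mulVec_inr, designT_mulVec_inr]
      have hsplit : ∀ (f : Fin n → ℝ), ∑ i ∈ stratSet stratum k, f i =
          ∑ i ∈ treatSet stratum Z k, f i + ∑ i ∈ ctrlSet stratum Z k, f i := fun f =>
        (Finset.sum_filter_add_sum_filter_not _ _ _).symm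
      rw [hsplit, hsplit Y]
      have ht : ∀ i ∈ treatSet stratum Z k, (X *ᵥ β) i
          = τ + ((T k + C k) / m k - τ * eS stratum Z k) := by
        intro i hi
        have hik : stratum i = k ∧ Z i = true := by simpa [treatSet, stratSet] using hi
        rw [hX, design_mulVec, hik.1]; simp [hik.2, hβ]
      have hc : ∀ i ∈ ctrlSet stratum Z k, (X *ᵥ β) i
          = ((T k + C k) / m k - τ * eS stratum Z k) := by
        intro i hi
        have hik : stratum i = k ∧ ¬ (Z i = true) := by simpa [ctrlSet, stratSet] using hi
        rw [hX, design_mulVec, hik.1]; simp [hik.2, hβ]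
      rw [Finset.sum_congr rfl ht, Finset.sum_congr rfl hc, Finset.sum_const,
        Finset.sum_const]
      have hcard1 : ((treatSet stratum Z k).card : ℝ) = a k := rfl
      have hcard0 : ((ctrlSet stratum Z k).card : ℝ) = b k := rfl
      rw [nsmul_eq_mul, nsmul_eq_mul, hcard1, hcard0, heS]
      have hTk : (∑ i ∈ treatSet stratum Z k, Y i) = T k := rfl
      have hCk : (∑ i ∈ ctrlSet stratum Z k, Y i) = C k := rfl
      rw [hTk, hCk, hmab k]
      have hm0 : a k + b k ≠ 0 := (add_pos (hapos k) (hbpos k)).ne'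
      field_simp
      ring
  -- invertibility
  have hdet : A.det ≠ 0 := by
    intro hdet0
    obtain ⟨v, hv0, hAv⟩ := (Matrix.exists_mulVec_eq_zero_iff).mpr hdet0
    have hXv : X *ᵥ v = 0 := by
      have h2 : (X *ᵥ v) ⬝ᵥ (X *ᵥ v) = 0 := by
        have : v ⬝ᵥ (A *ᵥ v) = 0 := by rw [hAv]; simp
        rw [hA, ← Matrix.mulVec_mulVec, Matrix.dotProduct_mulVec,
          Matrix.vecMul_transpose] at this
        exact this
      exact dotProduct_self_eq_zero.mp h2
    have hinr : ∀ k, v (Sum.inr k) = 0 := by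
      intro k
      obtain ⟨i, hi⟩ := Finset.card_pos.mp (h0 k)
      have hik : stratum i = k ∧ ¬ (Z i = true) := by simpa [ctrlSet, stratSet] using hi
      have := congrFun hXv i
      rw [hX, design_mulVec, hik.1] at this
      simpa [hik.2] using this
    have hinl : v (Sum.inl ()) = 0 := by
      obtain ⟨k⟩ := (inferInstance : Nonempty (Fin K))
      obtain ⟨i, hi⟩ := Finset.card_pos.mp (h1 k)
      have hik : stratum i = k ∧ Z i = true := by simpa [treatSet, stratSet] using hi
      have := congrFun hXv i
      rw [hX, design_mulVec, hik.1] at this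
      simp [hik.2, hinr k] at this
      exact this
    apply hv0
    funext j
    rcases j with ⟨⟨⟩⟩ | k
    · exact hinl
    · exact hinr k
  -- conclude
  have : olsCoef stratum Z Y = β := by
    rw [olsCoef, ← hX, ← hA, ← hnormal, Matrix.mulVec_mulVec,
      Matrix.nonsing_inv_mul A (isUnit_iff_ne_zero.mpr hdet), Matrix.one_mulVec]
  rw [this, hβ]
  simp
end

section
/- In the stratified-experiment regression, with Z̃_i = Z_i - e_[k] and Ỹ_i = Y_i - Ȳ_[k] for i in stratum k (where Ȳ_[k] = e_[k]Ȳ_[k]1 + (1-e_[k])Ȳ_[k]0), one has Σ_{i=1}^n Z̃_i Ỹ_i = n Σ_k π_[k] e_[k](1-e_[k]) τ̂_[k], where τ̂_[k] = Ȳ_[k]1 - Ȳ_[k]0. -/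
open Matrix Finset

theorem stmt_13 {n K : ℕ} (stratum : Fin n → Fin K) (Z : Fin n → Bool) (Y : Fin n → ℝ)
    (h1 : ∀ k, 0 < n1 stratum Z k) (h0 : ∀ k, 0 < n0 stratum Z k)
    (ybarS : Fin K → ℝ)
    (hybarS : ybarS = fun k =>
      eS stratum Z k * ybar1 stratum Z Y k + (1 - eS stratum Z k) * ybar0 stratum Z Y k) :
    (∑ i, zTilde stratum Z i * (Y i - ybarS (stratum i)))
      = n * ∑ k, piS stratum k * eS stratum Z k * (1 - eS stratum Z k)
          * tauK stratum Z Y k := by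

  rcases Nat.eq_zero_or_pos n with hn | hn
  · subst hn; simp
  have hnR : (n:ℝ) ≠ 0 := Nat.cast_ne_zero.mpr hn.ne'
  have hfib : (∑ i, zTilde stratum Z i * (Y i - ybarS (stratum i)))
      = ∑ k, ∑ i ∈ stratSet stratum k, zTilde stratum Z i * (Y i - ybarS (stratum i)) :=
    (Finset.sum_fiberwise _ _ _).symm
  rw [hfib, Finset.mul_sum]
  refine Finset.sum_congr rfl fun k _ => ?_
  have ha : (n1 stratum Z k : ℝ) ≠ 0 := Nat.cast_ne_zero.mpr (h1 k).ne'
  have hb : (n0 stratum Z k : ℝ) ≠ 0 := Nat.cast_ne_zero.mpr (h0 k).ne'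
  have hsplitN : n1 stratum Z k + n0 stratum Z k = nS stratum k :=
    Finset.card_filter_add_card_filter_not (s := stratSet stratum k)
      (p := fun i => Z i = true)
  have hnk : (nS stratum k : ℝ) = (n1 stratum Z k : ℝ) + (n0 stratum Z k : ℝ) := by
    exact_mod_cast hsplitN.symm
  have hnkne : (nS stratum k : ℝ) ≠ 0 := by
    rw [hnk]
    have h1' : (0:ℝ) < (n1 stratum Z k : ℝ) := by exact_mod_cast h1 k
    have h0' : (0:ℝ) < (n0 stratum Z k : ℝ) := by exact_mod_cast h0 k
    linarith
  have hmem : ∀ i ∈ stratSet stratum k, stratum i = k := fun i hi => by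
    simpa [stratSet] using hi
  have step1 : ∑ i ∈ stratSet stratum k, zTilde stratum Z i * (Y i - ybarS (stratum i))
      = ∑ i ∈ stratSet stratum k,
          ((if Z i then (1:ℝ) else 0) - eS stratum Z k) * (Y i - ybarS k) := by
    refine Finset.sum_congr rfl fun i hi => ?_
    rw [zTilde, hmem i hi]
  have step2 : ∑ i ∈ stratSet stratum k,
        ((if Z i then (1:ℝ) else 0) - eS stratum Z k) * (Y i - ybarS k)
      = (∑ i ∈ treatSet stratum Z k,
          ((if Z i then (1:ℝ) else 0) - eS stratum Z k) * (Y i - ybarS k))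
        + ∑ i ∈ ctrlSet stratum Z k,
          ((if Z i then (1:ℝ) else 0) - eS stratum Z k) * (Y i - ybarS k) :=
    (Finset.sum_filter_add_sum_filter_not _ (fun i => Z i = true) _).symm
  have hS1 : ∑ i ∈ treatSet stratum Z k, Y i
      = (n1 stratum Z k : ℝ) * ybar1 stratum Z Y k := by
    rw [ybar1]; field_simp
  have hS0 : ∑ i ∈ ctrlSet stratum Z k, Y i
      = (n0 stratum Z k : ℝ) * ybar0 stratum Z Y k := by
    rw [ybar0]; field_simp
  have t1 : ∑ i ∈ treatSet stratum Z k,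
        ((if Z i then (1:ℝ) else 0) - eS stratum Z k) * (Y i - ybarS k)
      = (1 - eS stratum Z k) *
          ((n1 stratum Z k : ℝ) * ybar1 stratum Z Y k
            - (n1 stratum Z k : ℝ) * ybarS k) := by
    have : ∀ i ∈ treatSet stratum Z k,
        ((if Z i then (1:ℝ) else 0) - eS stratum Z k) * (Y i - ybarS k)
          = (1 - eS stratum Z k) * (Y i - ybarS k) := by
      intro i hi
      have hz : Z i = true := by simpa [treatSet] using (Finset.mem_filter.mp hi).2
      simp [hz]
    rw [Finset.sum_congr rfl this, ← Finset.mul_sum, Finset.sum_sub_distrib,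
      Finset.sum_const, hS1, nsmul_eq_mul]
    rfl
  have t0 : ∑ i ∈ ctrlSet stratum Z k,
        ((if Z i then (1:ℝ) else 0) - eS stratum Z k) * (Y i - ybarS k)
      = (- eS stratum Z k) *
          ((n0 stratum Z k : ℝ) * ybar0 stratum Z Y k
            - (n0 stratum Z k : ℝ) * ybarS k) := by
    have : ∀ i ∈ ctrlSet stratum Z k,
        ((if Z i then (1:ℝ) else 0) - eS stratum Z k) * (Y i - ybarS k)
          = (- eS stratum Z k) * (Y i - ybarS k) := by
      intro i hi
      have hz : Z i = false := by
        have := (Finset.mem_filter.mp hi).2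
        simpa [ctrlSet] using this
      simp [hz]
    rw [Finset.sum_congr rfl this, ← Finset.mul_sum, Finset.sum_sub_distrib,
      Finset.sum_const, hS0, nsmul_eq_mul]
    rfl
  rw [step1, step2, t1, t0, hybarS]
  simp only [tauK, piS, eS]
  rw [hnk]
  field_simp
  ring
end

section
/- The sum of squared residuals from the stratified-experiment regression satisfies Σ_i ε̂_i² = Σ_k { n_[k]1 s_[k]1² + n_[k]1(1-e_[k])²(τ̂_[k]-τ̂_OLS)² + n_[k]0 s_[k]0² + n_[k]0 e_[k]²(τ̂_[k]-τ̂_OLS)² }, where s_[k]z² = (1/n_[k]z)Σ_{i∈[k],Z_i=z}(Y_i - Ȳ_[k]z)² for z ∈ {0,1}. -/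
open Matrix Finset

/-!
The OLS coefficients have a closed form: `Z` gets `τ̂_OLS` and the dummy of stratum `k` gets
`Ȳ_[k]0 + e_[k] (τ̂_[k] - τ̂_OLS)`. This vector solves the normal equations, because
`τ̂_OLS` is the mean of the `τ̂_[k]` weighted by `n_[k]1 (1 - e_[k]) = n_[k]0 e_[k]`, and the
design has full column rank since every stratum has treated and control units. Within each
(stratum, arm) cell the residuals are therefore the deviations from the cell mean shifted by a
constant; the deviations sum to zero, so the sum of squares splits into the cell variance and
the shift.
-/

open Matrix Finset

section LeastSquares

variable {m p : Type*} [Fintype m] [Fintype p] [DecidableEq p]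

theorem Matrix.isUnit_transpose_mul_self (X : Matrix m p ℝ) (hX : Function.Injective X.mulVec) :
    IsUnit (Xᵀ * X) := by
  simpa using (PosDef.conjTranspose_mul_self X hX).isUnit

theorem Matrix.transpose_mul_self_inv_mulVec_eq (X : Matrix m p ℝ)
    (hX : Function.Injective X.mulVec) {y : m → ℝ} {β : p → ℝ}
    (hβ : Xᵀ *ᵥ (y - X *ᵥ β) = 0) :
    (Xᵀ * X)⁻¹ *ᵥ (Xᵀ *ᵥ y) = β := by
  have hdet := (Matrix.isUnit_iff_isUnit_det _).mp (X.isUnit_transpose_mul_self hX)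
  rw [mulVec_sub, sub_eq_zero] at hβ
  rw [hβ, mulVec_mulVec, mulVec_mulVec, Matrix.mul_assoc, nonsing_inv_mul _ hdet, one_mulVec]

end LeastSquares

namespace Finset

variable {ι : Type*} (s : Finset ι)

theorem card_mul_sum_div_card (f : ι → ℝ) :
    (#s : ℝ) * ((∑ i ∈ s, f i) / #s) = ∑ i ∈ s, f i := by
  rcases s.eq_empty_or_nonempty with rfl | hs
  · simp
  · exact mul_div_cancel₀ _ (by exact_mod_cast hs.card_pos.ne')

theorem sum_sub_div_card_eq_zero (f : ι → ℝ) :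
    ∑ i ∈ s, (f i - (∑ j ∈ s, f j) / #s) = 0 := by
  rw [sum_sub_distrib, sum_const, nsmul_eq_mul, card_mul_sum_div_card, sub_self]

theorem sum_add_sq_of_sum_eq_zero (f : ι → ℝ) (c : ℝ) (hf : ∑ i ∈ s, f i = 0) :
    ∑ i ∈ s, (f i + c) ^ 2 = ∑ i ∈ s, f i ^ 2 + #s * c ^ 2 := by
  simp only [add_sq, sum_add_distrib, ← sum_mul, ← mul_sum, hf, sum_const, nsmul_eq_mul]
  ring

theorem sum_mul_sub_weighted_mean_eq_zero (a t : ι → ℝ) (ha : ∑ i ∈ s, a i ≠ 0) :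
    ∑ i ∈ s, a i * (t i - ∑ j ∈ s, a j / (∑ l ∈ s, a l) * t j) = 0 := by
  simp only [mul_sub, sum_sub_distrib, ← sum_mul, div_mul_eq_mul_div, ← sum_div,
    mul_div_cancel₀ _ ha, sub_self]

end Finset

section Strata

variable {n K : ℕ} {stratum : Fin n → Fin K} {Z : Fin n → Bool} {Y : Fin n → ℝ}

theorem mem_treatSet {k : Fin K} {i : Fin n} :
    i ∈ treatSet stratum Z k ↔ stratum i = k ∧ Z i = true := by
  simp [treatSet, stratSet]

theorem mem_ctrlSet {k : Fin K} {i : Fin n} :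
    i ∈ ctrlSet stratum Z k ↔ stratum i = k ∧ Z i = false := by
  simp [ctrlSet, stratSet]

theorem sum_eq_sum_stratSet (stratum : Fin n → Fin K) (f : Fin n → ℝ) :
    ∑ i, f i = ∑ k, ∑ i ∈ stratSet stratum k, f i :=
  (sum_fiberwise univ stratum f).symm

theorem sum_stratSet_eq_add (Z : Fin n → Bool) (k : Fin K) (f : Fin n → ℝ) :
    ∑ i ∈ stratSet stratum k, f i
      = ∑ i ∈ treatSet stratum Z k, f i + ∑ i ∈ ctrlSet stratum Z k, f i :=
  (sum_filter_add_sum_filter_not _ _ _).symm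

theorem sum_filter_eq_sum_treatSet (stratum : Fin n → Fin K) (f : Fin n → ℝ) :
    ∑ i with Z i, f i = ∑ k, ∑ i ∈ treatSet stratum Z k, f i := by
  rw [← sum_fiberwise _ stratum]
  refine sum_congr rfl fun k _ => sum_congr ?_ fun _ _ => rfl
  ext i
  simp [mem_treatSet, and_comm]

theorem nS_eq_n1_add_n0 (k : Fin K) : nS stratum k = n1 stratum Z k + n0 stratum Z k :=
  (card_filter_add_card_filter_not _).symm

theorem n1_eq_zero_of_nS_eq_zero {k : Fin K} (h : nS stratum k = 0) : n1 stratum Z k = 0 := by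
  have := nS_eq_n1_add_n0 (stratum := stratum) (Z := Z) k
  omega

theorem piS_mul_eS (k : Fin K) : piS stratum k * eS stratum Z k = n1 stratum Z k / n := by
  rcases eq_or_ne (nS stratum k) 0 with h | h
  · have := n1_eq_zero_of_nS_eq_zero (Z := Z) h
    simp [piS, eS, h, this]
  · rw [piS, eS, div_mul_div_comm, mul_comm, mul_div_mul_right _ _ (by exact_mod_cast h)]

theorem n1_mul_one_sub_eS (k : Fin K) :
    n1 stratum Z k * (1 - eS stratum Z k) = n1 stratum Z k * n0 stratum Z k / nS stratum k := by
  rcases eq_or_ne (nS stratum k) 0 with h | h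
  · have := n1_eq_zero_of_nS_eq_zero (Z := Z) h
    simp [this]
  · have hS : (nS stratum k : ℝ) ≠ 0 := by exact_mod_cast h
    rw [eS, nS_eq_n1_add_n0 (Z := Z)] at *
    field_simp
    push_cast
    ring

theorem n1_mul_one_sub_eS_eq_n0_mul_eS (k : Fin K) :
    n1 stratum Z k * (1 - eS stratum Z k) = n0 stratum Z k * eS stratum Z k := by
  rw [n1_mul_one_sub_eS, eS]
  ring

theorem wS_eq (hn : n ≠ 0) (k : Fin K) :
    wS stratum Z k = n1 stratum Z k * (1 - eS stratum Z k)
      / ∑ k', n1 stratum Z k' * (1 - eS stratum Z k') := by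
  simp only [wS, piS_mul_eS, div_mul_eq_mul_div, ← sum_div]
  exact div_div_div_cancel_right₀ (by exact_mod_cast hn) _ _

theorem sum_n1_mul_one_sub_eS_pos [Nonempty (Fin K)] (h1 : ∀ k, 0 < n1 stratum Z k)
    (h0 : ∀ k, 0 < n0 stratum Z k) : 0 < ∑ k, n1 stratum Z k * (1 - eS stratum Z k) := by
  refine sum_pos (fun k _ => ?_) univ_nonempty
  have h1k := h1 k
  have h0k := h0 k
  have hSk : 0 < nS stratum k := by rw [nS_eq_n1_add_n0 (Z := Z)]; omega
  rw [n1_mul_one_sub_eS]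
  positivity

theorem sum_treatSet_sub_ybar1 (k : Fin K) :
    ∑ i ∈ treatSet stratum Z k, (Y i - ybar1 stratum Z Y k) = 0 :=
  sum_sub_div_card_eq_zero _ Y

theorem sum_ctrlSet_sub_ybar0 (k : Fin K) :
    ∑ i ∈ ctrlSet stratum Z k, (Y i - ybar0 stratum Z Y k) = 0 :=
  sum_sub_div_card_eq_zero _ Y

theorem sum_sq_treatSet_sub_ybar1_add (k : Fin K) (c : ℝ) :
    ∑ i ∈ treatSet stratum Z k, (Y i - ybar1 stratum Z Y k + c) ^ 2
      = n1 stratum Z k * s1sq stratum Z Y k + n1 stratum Z k * c ^ 2 := by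
  rw [sum_add_sq_of_sum_eq_zero _ _ _ (sum_treatSet_sub_ybar1 k), s1sq, n1,
    card_mul_sum_div_card]

theorem sum_sq_ctrlSet_sub_ybar0_add (k : Fin K) (c : ℝ) :
    ∑ i ∈ ctrlSet stratum Z k, (Y i - ybar0 stratum Z Y k + c) ^ 2
      = n0 stratum Z k * s0sq stratum Z Y k + n0 stratum Z k * c ^ 2 := by
  rw [sum_add_sq_of_sum_eq_zero _ _ _ (sum_ctrlSet_sub_ybar0 k), s0sq, n0,
    card_mul_sum_div_card]

end Strata

section Regression

variable {n K : ℕ} {stratum : Fin n → Fin K} {Z : Fin n → Bool} {Y : Fin n → ℝ}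

theorem design_mulVec_apply (v : Unit ⊕ Fin K → ℝ) (i : Fin n) :
    (design stratum Z *ᵥ v) i
      = (if Z i then v (Sum.inl ()) else 0) + v (Sum.inr (stratum i)) := by
  simp [mulVec, dotProduct, design]

theorem transpose_design_mulVec_inl (r : Fin n → ℝ) :
    ((design stratum Z)ᵀ *ᵥ r) (Sum.inl ()) = ∑ k, ∑ i ∈ treatSet stratum Z k, r i := by
  simp [mulVec, dotProduct, design, ← sum_filter_eq_sum_treatSet, sum_filter]

theorem transpose_design_mulVec_inr (r : Fin n → ℝ) (k : Fin K) :
    ((design stratum Z)ᵀ *ᵥ r) (Sum.inr k) = ∑ i ∈ stratSet stratum k, r i := by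
  simp [mulVec, dotProduct, design, stratSet, sum_filter]

theorem design_mulVec_injective [Nonempty (Fin K)] (h1 : ∀ k, 0 < n1 stratum Z k)
    (h0 : ∀ k, 0 < n0 stratum Z k) : Function.Injective (design stratum Z).mulVec := by
  suffices h : ∀ v, design stratum Z *ᵥ v = 0 → v = 0 from
    fun v w hvw => sub_eq_zero.mp (h _ (by rw [mulVec_sub, hvw, sub_self]))
  intro v hv
  have hstrat : ∀ k, v (Sum.inr k) = 0 := fun k => by
    obtain ⟨i, hi⟩ := card_pos.mp (h0 k)
    rw [mem_ctrlSet] at hi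
    simpa [design_mulVec_apply, hi.1, hi.2] using congrFun hv i
  obtain ⟨k⟩ := ‹Nonempty (Fin K)›
  obtain ⟨i, hi⟩ := card_pos.mp (h1 k)
  rw [mem_treatSet] at hi
  have htreat : v (Sum.inl ()) = 0 := by
    simpa [design_mulVec_apply, hi.1, hi.2, hstrat] using congrFun hv i
  ext (_ | k)
  exacts [htreat, hstrat k]

noncomputable def strataCoef (stratum : Fin n → Fin K) (Z : Fin n → Bool) (Y : Fin n → ℝ) :
    Unit ⊕ Fin K → ℝ
  | Sum.inl _ => tauOLS stratum Z Y
  | Sum.inr k =>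
    ybar0 stratum Z Y k + eS stratum Z k * (tauK stratum Z Y k - tauOLS stratum Z Y)

theorem sub_design_mulVec_strataCoef_of_mem_treatSet {k : Fin K} {i : Fin n}
    (hi : i ∈ treatSet stratum Z k) :
    Y i - (design stratum Z *ᵥ strataCoef stratum Z Y) i
      = Y i - ybar1 stratum Z Y k
        + (1 - eS stratum Z k) * (tauK stratum Z Y k - tauOLS stratum Z Y) := by
  rw [mem_treatSet] at hi
  simp only [design_mulVec_apply, hi.1, hi.2, strataCoef, if_true, tauK]
  ring

theorem sub_design_mulVec_strataCoef_of_mem_ctrlSet {k : Fin K} {i : Fin n}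
    (hi : i ∈ ctrlSet stratum Z k) :
    Y i - (design stratum Z *ᵥ strataCoef stratum Z Y) i
      = Y i - ybar0 stratum Z Y k
        - eS stratum Z k * (tauK stratum Z Y k - tauOLS stratum Z Y) := by
  rw [mem_ctrlSet] at hi
  simp only [design_mulVec_apply, hi.1, hi.2, strataCoef, Bool.false_eq_true, if_false]
  ring

theorem sum_treatSet_sub_design_mulVec_strataCoef (k : Fin K) :
    ∑ i ∈ treatSet stratum Z k, (Y i - (design stratum Z *ᵥ strataCoef stratum Z Y) i)
      = n1 stratum Z k * (1 - eS stratum Z k) * (tauK stratum Z Y k - tauOLS stratum Z Y) := by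
  rw [sum_congr rfl fun i hi => sub_design_mulVec_strataCoef_of_mem_treatSet hi,
    sum_add_distrib, sum_treatSet_sub_ybar1, sum_const, nsmul_eq_mul, n1]
  ring

theorem sum_ctrlSet_sub_design_mulVec_strataCoef (k : Fin K) :
    ∑ i ∈ ctrlSet stratum Z k, (Y i - (design stratum Z *ᵥ strataCoef stratum Z Y) i)
      = -(n0 stratum Z k * eS stratum Z k * (tauK stratum Z Y k - tauOLS stratum Z Y)) := by
  rw [sum_congr rfl fun i hi => sub_design_mulVec_strataCoef_of_mem_ctrlSet hi,
    sum_sub_distrib, sum_ctrlSet_sub_ybar0, sum_const, nsmul_eq_mul, n0]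
  ring

theorem transpose_design_mulVec_sub_strataCoef [Nonempty (Fin K)]
    (h1 : ∀ k, 0 < n1 stratum Z k) (h0 : ∀ k, 0 < n0 stratum Z k) :
    (design stratum Z)ᵀ *ᵥ (Y - design stratum Z *ᵥ strataCoef stratum Z Y) = 0 := by
  ext (_ | k)
  · have hn : n ≠ 0 := by
      obtain ⟨k⟩ := ‹Nonempty (Fin K)›
      exact (card_pos.mp (h1 k)).choose.pos.ne'
    have hτ : tauOLS stratum Z Y = ∑ k, n1 stratum Z k * (1 - eS stratum Z k)
        / (∑ k', n1 stratum Z k' * (1 - eS stratum Z k')) * tauK stratum Z Y k := by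
      simp only [tauOLS, wS_eq hn]
    rw [transpose_design_mulVec_inl, Pi.zero_apply]
    simp only [Pi.sub_apply, sum_treatSet_sub_design_mulVec_strataCoef, hτ]
    exact sum_mul_sub_weighted_mean_eq_zero _ _ _ (sum_n1_mul_one_sub_eS_pos h1 h0).ne'
  · rw [transpose_design_mulVec_inr, Pi.zero_apply, sum_stratSet_eq_add Z]
    simp only [Pi.sub_apply, sum_treatSet_sub_design_mulVec_strataCoef,
      sum_ctrlSet_sub_design_mulVec_strataCoef, n1_mul_one_sub_eS_eq_n0_mul_eS]
    ring

theorem olsCoef_eq_strataCoef [Nonempty (Fin K)] (h1 : ∀ k, 0 < n1 stratum Z k)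
    (h0 : ∀ k, 0 < n0 stratum Z k) : olsCoef stratum Z Y = strataCoef stratum Z Y :=
  (design stratum Z).transpose_mul_self_inv_mulVec_eq (design_mulVec_injective h1 h0)
    (transpose_design_mulVec_sub_strataCoef h1 h0)

theorem olsResid_of_mem_treatSet (h1 : ∀ k, 0 < n1 stratum Z k) (h0 : ∀ k, 0 < n0 stratum Z k)
    {k : Fin K} {i : Fin n} (hi : i ∈ treatSet stratum Z k) :
    olsResid stratum Z Y i
      = Y i - ybar1 stratum Z Y k
        + (1 - eS stratum Z k) * (tauK stratum Z Y k - tauOLS stratum Z Y) := by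
  have : Nonempty (Fin K) := ⟨k⟩
  rw [olsResid, olsCoef_eq_strataCoef h1 h0, sub_design_mulVec_strataCoef_of_mem_treatSet hi]

theorem olsResid_of_mem_ctrlSet (h1 : ∀ k, 0 < n1 stratum Z k) (h0 : ∀ k, 0 < n0 stratum Z k)
    {k : Fin K} {i : Fin n} (hi : i ∈ ctrlSet stratum Z k) :
    olsResid stratum Z Y i
      = Y i - ybar0 stratum Z Y k
        - eS stratum Z k * (tauK stratum Z Y k - tauOLS stratum Z Y) := by
  have : Nonempty (Fin K) := ⟨k⟩
  rw [olsResid, olsCoef_eq_strataCoef h1 h0, sub_design_mulVec_strataCoef_of_mem_ctrlSet hi]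

theorem sum_sq_olsResid_treatSet (h1 : ∀ k, 0 < n1 stratum Z k) (h0 : ∀ k, 0 < n0 stratum Z k)
    (k : Fin K) :
    ∑ i ∈ treatSet stratum Z k, olsResid stratum Z Y i ^ 2
      = n1 stratum Z k * s1sq stratum Z Y k
        + n1 stratum Z k * (1 - eS stratum Z k) ^ 2
          * (tauK stratum Z Y k - tauOLS stratum Z Y) ^ 2 := by
  rw [sum_congr rfl fun i hi => congrArg (· ^ 2) (olsResid_of_mem_treatSet h1 h0 hi),
    sum_sq_treatSet_sub_ybar1_add]
  ring

theorem sum_sq_olsResid_ctrlSet (h1 : ∀ k, 0 < n1 stratum Z k) (h0 : ∀ k, 0 < n0 stratum Z k)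
    (k : Fin K) :
    ∑ i ∈ ctrlSet stratum Z k, olsResid stratum Z Y i ^ 2
      = n0 stratum Z k * s0sq stratum Z Y k
        + n0 stratum Z k * eS stratum Z k ^ 2
          * (tauK stratum Z Y k - tauOLS stratum Z Y) ^ 2 := by
  rw [sum_congr rfl fun i hi => congrArg (· ^ 2)
      ((olsResid_of_mem_ctrlSet h1 h0 hi).trans (sub_eq_add_neg _ _)),
    sum_sq_ctrlSet_sub_ybar0_add]
  ring

end Regression

theorem stmt_15 {n K : ℕ} (stratum : Fin n → Fin K) (Z : Fin n → Bool) (Y : Fin n → ℝ)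
    (h1 : ∀ k, 0 < n1 stratum Z k) (h0 : ∀ k, 0 < n0 stratum Z k) :
    (∑ i, olsResid stratum Z Y i ^ 2)
      = ∑ k,
          ((n1 stratum Z k : ℝ) * s1sq stratum Z Y k
            + (n1 stratum Z k : ℝ) * (1 - eS stratum Z k) ^ 2
                * (tauK stratum Z Y k - tauOLS stratum Z Y) ^ 2
            + (n0 stratum Z k : ℝ) * s0sq stratum Z Y k
            + (n0 stratum Z k : ℝ) * eS stratum Z k ^ 2
                * (tauK stratum Z Y k - tauOLS stratum Z Y) ^ 2) := by
  rw [sum_eq_sum_stratSet stratum]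
  refine sum_congr rfl fun k _ => ?_
  rw [sum_stratSet_eq_add Z, sum_sq_olsResid_treatSet h1 h0, sum_sq_olsResid_ctrlSet h1 h0]
  ring
end
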